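/- Cross-world identification step (PIIE, T = 0): under (i) M(a) ⫫ A | L, (ii) Y(m) ⫫ M | L, A, (iii) Y(m) ⫫ M(a) | L, and consistency (A = a ⟹ M(a) = M; M = m ⟹ Y(m) = Y, a.s.), with positivity, the functional E[Y(A, M(a))] equals the front-door functional Σ_{ℓ,m} p(m | ℓ, a)[Σ_{a'} E[Y | ℓ, a', m] p(a' | ℓ)] p(ℓ). -/
import Mathlib


attribute [local instance] Classical.propDecidable

noncomputable section

/-- Probability of an event under pmf `w` on a finite sample space. -/
def Pr {Ω : Type} [Fintype Ω] (w : Ω → ℝ) (E : Ω → Prop) : ℝ :=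
  ∑ ω, if E ω then w ω else 0

/-- Conditional probability `P(E | F)`. -/
def cPr {Ω : Type} [Fintype Ω] (w : Ω → ℝ) (E F : Ω → Prop) : ℝ :=
  Pr w (fun ω => E ω ∧ F ω) / Pr w F

/-- Expectation of a real random variable. -/
def Exp {Ω : Type} [Fintype Ω] (w : Ω → ℝ) (Y : Ω → ℝ) : ℝ :=
  ∑ ω, Y ω * w ω

/-- Conditional expectation `E[Y | F]`. -/
def cExp {Ω : Type} [Fintype Ω] (w : Ω → ℝ) (Y : Ω → ℝ) (F : Ω → Prop) : ℝ :=
  (∑ ω, if F ω then Y ω * w ω else 0) / Pr w F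

section Helpers

variable {Ω : Type} [Fintype Ω]

/-- Partial integral `E[X ; F]`. -/
def pInt (w X : Ω → ℝ) (F : Ω → Prop) : ℝ :=
  ∑ ω, if F ω then X ω * w ω else 0

lemma cExp_def (w X : Ω → ℝ) (F : Ω → Prop) :
    cExp w X F = pInt w X F / Pr w F := rfl

lemma Pr_congr (w : Ω → ℝ) {E F : Ω → Prop} (h : ∀ ω, E ω ↔ F ω) :
    Pr w E = Pr w F :=
  Finset.sum_congr rfl fun ω _ => if_congr (h ω) rfl rfl

lemma cPr_congr (w : Ω → ℝ) {E E' F F' : Ω → Prop} (hE : ∀ ω, E ω ↔ E' ω)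
    (hF : ∀ ω, F ω ↔ F' ω) : cPr w E F = cPr w E' F' := by
  unfold cPr
  rw [Pr_congr w (E := fun ω => E ω ∧ F ω) (F := fun ω => E' ω ∧ F' ω)
      (fun ω => and_congr (hE ω) (hF ω)), Pr_congr w hF]

lemma pInt_congr (w : Ω → ℝ) {X X' : Ω → ℝ} {F F' : Ω → Prop}
    (hF : ∀ ω, F ω ↔ F' ω) (hX : ∀ ω, F ω → X ω = X' ω) :
    pInt w X F = pInt w X' F' := by
  refine Finset.sum_congr rfl fun ω _ => ?_
  by_cases h : F ω
  · rw [if_pos h, if_pos ((hF ω).mp h), hX ω h]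
  · rw [if_neg h, if_neg (fun h' => h ((hF ω).mpr h'))]

lemma Pr_mono (w : Ω → ℝ) (hw : ∀ ω, 0 ≤ w ω) {E F : Ω → Prop}
    (h : ∀ ω, E ω → F ω) : Pr w E ≤ Pr w F := by
  refine Finset.sum_le_sum fun ω _ => ?_
  by_cases hE : E ω
  · rw [if_pos hE, if_pos (h ω hE)]
  · rw [if_neg hE]; by_cases hF : F ω
    · rw [if_pos hF]; exact hw ω
    · rw [if_neg hF]

lemma pInt_eq_zero (w X : Ω → ℝ) (hw : ∀ ω, 0 ≤ w ω) {F : Ω → Prop}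
    (h : Pr w F = 0) : pInt w X F = 0 := by
  have hz : ∀ ω ∈ Finset.univ, (if F ω then w ω else 0) = 0 := by
    rw [← Finset.sum_eq_zero_iff_of_nonneg]
    · exact h
    · intro ω _
      by_cases hF : F ω
      · rw [if_pos hF]; exact hw ω
      · rw [if_neg hF]
  refine Finset.sum_eq_zero fun ω _ => ?_
  by_cases hF : F ω
  · have := hz ω (Finset.mem_univ ω)
    rw [if_pos hF] at this
    rw [if_pos hF, this, mul_zero]
  · rw [if_neg hF]

/-- Decomposition of the partial integral over the values of `X`. -/
lemma pInt_decomp (w X : Ω → ℝ) (F : Ω → Prop) :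
    pInt w X F = ∑ y ∈ Finset.univ.image X, y * Pr w (fun ω => X ω = y ∧ F ω) := by
  unfold pInt Pr
  simp_rw [Finset.mul_sum, mul_ite, mul_zero]
  rw [Finset.sum_comm]
  refine Finset.sum_congr rfl fun ω _ => ?_
  by_cases hF : F ω
  · rw [if_pos hF]
    have : ∀ y, (if X ω = y ∧ F ω then y * w ω else 0) = if X ω = y then y * w ω else 0 := by
      intro y; by_cases h : X ω = y
      · rw [if_pos ⟨h, hF⟩, if_pos h]
      · rw [if_neg (fun hc => h hc.1), if_neg h]
    simp_rw [this]
    rw [Finset.sum_ite_eq, if_pos (Finset.mem_image_of_mem X (Finset.mem_univ ω))]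
  · rw [if_neg hF]
    exact (Finset.sum_eq_zero fun y _ => if_neg (fun hc : X ω = y ∧ F ω => hF hc.2)).symm

lemma cExp_value (w X : Ω → ℝ) (F : Ω → Prop) :
    cExp w X F = ∑ y ∈ Finset.univ.image X, y * cPr w (fun ω => X ω = y) F := by
  rw [cExp_def, pInt_decomp, Finset.sum_div]
  exact Finset.sum_congr rfl fun y _ => by rw [cPr, mul_div_assoc]

/-- Equality of conditional distributions lifts to conditional expectations. -/
lemma cExp_indep (w X : Ω → ℝ) (F G : Ω → Prop)
    (h : ∀ y, cPr w (fun ω => X ω = y) F = cPr w (fun ω => X ω = y) G) :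
    cExp w X F = cExp w X G := by
  rw [cExp_value, cExp_value]
  exact Finset.sum_congr rfl fun y _ => by rw [h y]

/-- Partition of a partial integral by the value of a discrete variable. -/
lemma pInt_partition {β : Type} [Fintype β] (w X : Ω → ℝ) (F : Ω → Prop) (S : Ω → β) :
    pInt w X F = ∑ b, pInt w X (fun ω => S ω = b ∧ F ω) := by
  unfold pInt
  rw [Finset.sum_comm]
  refine Finset.sum_congr rfl fun ω _ => ?_
  beta_reduce
  by_cases hF : F ω
  · rw [if_pos hF]
    refine Eq.symm ((Finset.sum_eq_single (S ω) ?_ ?_).trans ?_)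
    · intro b _ hb
      exact if_neg fun hc => hb hc.1.symm
    · intro h
      exact absurd (Finset.mem_univ _) h
    · exact if_pos ⟨rfl, hF⟩
  · rw [if_neg hF]
    refine Eq.symm (Finset.sum_eq_zero fun b _ => ?_)
    exact if_neg fun hc => hF hc.2

/-- Law of total (conditional) expectation over a discrete variable. -/
lemma cExp_total {β : Type} [Fintype β] (w X : Ω → ℝ) (G : Ω → Prop) (S : Ω → β)
    (hG : Pr w G ≠ 0) (hGb : ∀ b, Pr w (fun ω => G ω ∧ S ω = b) ≠ 0) :
    cExp w X G = ∑ b, cExp w X (fun ω => G ω ∧ S ω = b) * cPr w (fun ω => S ω = b) G := by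
  have hterm : ∀ b, cExp w X (fun ω => G ω ∧ S ω = b) * cPr w (fun ω => S ω = b) G
      = pInt w X (fun ω => S ω = b ∧ G ω) / Pr w G := by
    intro b
    rw [cExp_def, cPr]
    have h1 : Pr w (fun ω => S ω = b ∧ G ω) = Pr w (fun ω => G ω ∧ S ω = b) :=
      Pr_congr w fun ω => and_comm
    have h2 : pInt w X (fun ω => G ω ∧ S ω = b) = pInt w X (fun ω => S ω = b ∧ G ω) :=
      pInt_congr w (fun ω => and_comm) (fun _ _ => rfl)
    rw [h1, h2, div_mul_div_comm, mul_comm (pInt w X fun ω => S ω = b ∧ G ω),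
      mul_div_mul_left _ _ (hGb b)]
  simp_rw [hterm]
  rw [← Finset.sum_div, ← pInt_partition, cExp_def]

end Helpers

/-- cross-world identification of the PIIE functional (T = 0):
under M(a) ⫫ A | L, Y(m) ⫫ M | (L, A), Y(m) ⫫ M(a) | L, consistency and
positivity, `E[Y(A, M(a))]` equals the front-door functional. -/
theorem piie_frontdoor_identification
    {Ω 𝓛 𝓜 : Type} [Fintype Ω] [Fintype 𝓛] [Fintype 𝓜]
    (w : Ω → ℝ) (hw : ∀ ω, 0 ≤ w ω) (hw1 : ∑ ω, w ω = 1)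
    (L : Ω → 𝓛) (A : Ω → Bool) (M : Ω → 𝓜) (Y : Ω → ℝ) (a : Bool)
    (Ma : Ω → 𝓜)       -- counterfactual mediator M(a)
    (Ym : 𝓜 → Ω → ℝ)   -- counterfactual outcome Y(m) for each m
    -- positivity of all conditioning events
    (hpos : ∀ (ℓ : 𝓛) (a'' : Bool) (m : 𝓜),
      0 < Pr w (fun ω => L ω = ℓ ∧ A ω = a'' ∧ M ω = m))
    -- (i) M(a) ⫫ A | L
    (hMaA : ∀ (m : 𝓜) (ℓ : 𝓛) (a'' : Bool),
      cPr w (fun ω => Ma ω = m) (fun ω => L ω = ℓ ∧ A ω = a'')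
        = cPr w (fun ω => Ma ω = m) (fun ω => L ω = ℓ))
    -- (ii) Y(m) ⫫ M | L, A
    (hYmM : ∀ (m : 𝓜) (y : ℝ) (ℓ : 𝓛) (a'' : Bool) (m'' : 𝓜),
      cPr w (fun ω => Ym m ω = y) (fun ω => L ω = ℓ ∧ A ω = a'' ∧ M ω = m'')
        = cPr w (fun ω => Ym m ω = y) (fun ω => L ω = ℓ ∧ A ω = a''))
    -- (iii) cross-world: Y(m) ⫫ M(a) | L
    (hYmMa : ∀ (m : 𝓜) (y : ℝ) (ℓ : 𝓛) (m'' : 𝓜),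
      cPr w (fun ω => Ym m ω = y) (fun ω => L ω = ℓ ∧ Ma ω = m'')
        = cPr w (fun ω => Ym m ω = y) (fun ω => L ω = ℓ))
    -- consistency: A = a ⟹ M(a) = M, and M = m ⟹ Y(m) = Y
    (hconsM : ∀ ω, A ω = a → Ma ω = M ω)
    (hconsY : ∀ ω, Ym (M ω) ω = Y ω) :
    -- E[Y(A, M(a))], where Y(A, M(a)) = Y(m) on the event {M(a) = m}
    Exp w (fun ω => Ym (Ma ω) ω)
      = ∑ ℓ : 𝓛, ∑ m : 𝓜,
          cPr w (fun ω => M ω = m) (fun ω => L ω = ℓ ∧ A ω = a)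
            * (∑ a' : Bool,
                cExp w Y (fun ω => L ω = ℓ ∧ A ω = a' ∧ M ω = m)
                  * cPr w (fun ω => A ω = a') (fun ω => L ω = ℓ))
            * Pr w (fun ω => L ω = ℓ) := by
  have hΩ : Nonempty Ω := by
    by_contra h
    rw [not_nonempty_iff] at h
    rw [Finset.univ_eq_empty, Finset.sum_empty] at hw1
    norm_num at hw1
  obtain ⟨ω₀⟩ := hΩ
  have hL : ∀ ℓ, 0 < Pr w (fun ω => L ω = ℓ) := fun ℓ =>
    lt_of_lt_of_le (hpos ℓ a (M ω₀)) (Pr_mono w hw fun ω h => h.1)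
  have hLA : ∀ ℓ a'', 0 < Pr w (fun ω => L ω = ℓ ∧ A ω = a'') := fun ℓ a'' =>
    lt_of_lt_of_le (hpos ℓ a'' (M ω₀)) (Pr_mono w hw fun ω h => ⟨h.1, h.2.1⟩)
  have h0 : Exp w (fun ω => Ym (Ma ω) ω)
      = ∑ ℓ : 𝓛, ∑ m : 𝓜, pInt w (Ym m) (fun ω => L ω = ℓ ∧ Ma ω = m) := by
    have e1 : Exp w (fun ω => Ym (Ma ω) ω)
        = pInt w (fun ω => Ym (Ma ω) ω) (fun _ => True) := by
      unfold Exp pInt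
      exact Finset.sum_congr rfl fun ω _ => (if_pos trivial).symm
    rw [e1, pInt_partition w _ _ L]
    refine Finset.sum_congr rfl fun ℓ _ => ?_
    rw [pInt_partition w _ _ Ma]
    refine Finset.sum_congr rfl fun m _ => ?_
    exact pInt_congr w (fun ω => ⟨fun h => ⟨h.2.1, h.1⟩, fun h => ⟨h.2, h.1, trivial⟩⟩)
      (fun ω h => by rw [h.1])
  have key : ∀ (ℓ : 𝓛) (m : 𝓜), pInt w (Ym m) (fun ω => L ω = ℓ ∧ Ma ω = m)
      = cPr w (fun ω => M ω = m) (fun ω => L ω = ℓ ∧ A ω = a)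
          * (∑ a' : Bool,
              cExp w Y (fun ω => L ω = ℓ ∧ A ω = a' ∧ M ω = m)
                * cPr w (fun ω => A ω = a') (fun ω => L ω = ℓ))
          * Pr w (fun ω => L ω = ℓ) := by
    intro ℓ m
    have hA : pInt w (Ym m) (fun ω => L ω = ℓ ∧ Ma ω = m)
        = cExp w (Ym m) (fun ω => L ω = ℓ) * Pr w (fun ω => L ω = ℓ ∧ Ma ω = m) := by
      by_cases hF : Pr w (fun ω => L ω = ℓ ∧ Ma ω = m) = 0
      · rw [pInt_eq_zero w _ hw hF, hF, mul_zero]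
      · rw [← cExp_indep w (Ym m) (fun ω => L ω = ℓ ∧ Ma ω = m) (fun ω => L ω = ℓ)
            (fun y => hYmMa m y ℓ m), cExp_def, div_mul_cancel₀ _ hF]
    have hB : Pr w (fun ω => L ω = ℓ ∧ Ma ω = m)
        = cPr w (fun ω => M ω = m) (fun ω => L ω = ℓ ∧ A ω = a)
            * Pr w (fun ω => L ω = ℓ) := by
      have h1 : Pr w (fun ω => L ω = ℓ ∧ Ma ω = m)
          = cPr w (fun ω => Ma ω = m) (fun ω => L ω = ℓ) * Pr w (fun ω => L ω = ℓ) := by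
        rw [cPr, div_mul_cancel₀ _ (ne_of_gt (hL ℓ))]
        exact Pr_congr w fun ω => and_comm
      have h2 : cPr w (fun ω => Ma ω = m) (fun ω => L ω = ℓ ∧ A ω = a)
          = cPr w (fun ω => M ω = m) (fun ω => L ω = ℓ ∧ A ω = a) := by
        unfold cPr
        congr 1
        refine Pr_congr w fun ω => ?_
        constructor
        · rintro ⟨h1', h2'⟩
          exact ⟨show M ω = m by rw [← hconsM ω h2'.2]; exact h1', h2'⟩
        · rintro ⟨h1', h2'⟩
          exact ⟨show Ma ω = m by rw [hconsM ω h2'.2]; exact h1', h2'⟩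
      rw [h1, ← hMaA m ℓ a, h2]
    have hC : cExp w (Ym m) (fun ω => L ω = ℓ)
        = ∑ a' : Bool, cExp w (Ym m) (fun ω => L ω = ℓ ∧ A ω = a')
            * cPr w (fun ω => A ω = a') (fun ω => L ω = ℓ) :=
      cExp_total w (Ym m) _ A (ne_of_gt (hL ℓ)) (fun b => ne_of_gt (hLA ℓ b))
    have hD : ∀ a' : Bool, cExp w (Ym m) (fun ω => L ω = ℓ ∧ A ω = a')
        = cExp w Y (fun ω => L ω = ℓ ∧ A ω = a' ∧ M ω = m) := by
      intro a'
      rw [← cExp_indep w (Ym m) (fun ω => L ω = ℓ ∧ A ω = a' ∧ M ω = m)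
          (fun ω => L ω = ℓ ∧ A ω = a') (fun y => hYmM m y ℓ a' m)]
      rw [cExp_def, cExp_def]
      congr 1
      exact pInt_congr w (fun ω => Iff.rfl) (fun ω h => by rw [← h.2.2]; exact hconsY ω)
    rw [hA, hB, hC, Finset.sum_congr rfl (fun a' _ => by rw [hD a'])]
    ring
  rw [h0]
  exact Finset.sum_congr rfl fun ℓ _ => Finset.sum_congr rfl fun m _ => key ℓ m
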